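/- Let μ, λ : [0,T] → R^k be integrable with μ(t) ≺ λ(t) for all t. Then ∫₀ᵀ μ(t) dt ≺ ∫₀ᵀ λ↓(t) dt, where λ↓(t) is the decreasing rearrangement of λ(t) applied pointwise in t, and integration is entrywise. -/
import Mathlib


open scoped BigOperators

/-- The decreasing rearrangement of a vector in `ℝ^k`. -/
noncomputable def descSort {k : ℕ} (x : Fin k → ℝ) : Fin k → ℝ :=
  fun i => (x ∘ Tuple.sort x) i.rev

/-- Sum of the `m` largest entries of `x`, i.e. partial sum of the
decreasing rearrangement. -/
noncomputable def partSum {k : ℕ} (x : Fin k → ℝ) (m : ℕ) : ℝ :=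
  ∑ i : Fin k, if (i : ℕ) < m then descSort x i else 0

/-- `Majorized x y` means `x ≺ y`. -/
noncomputable def Majorized {k : ℕ} (x y : Fin k → ℝ) : Prop :=
  (∀ m : ℕ, m < k → partSum x m ≤ partSum y m) ∧ (∑ i, x i = ∑ i, y i)

section Helpers
open Finset

noncomputable def ePerm {k : ℕ} (x : Fin k → ℝ) : Equiv.Perm (Fin k) :=
  (Fin.revPerm).trans (Tuple.sort x)

lemma descSort_eq {k : ℕ} (x : Fin k → ℝ) (i : Fin k) :
    descSort x i = x (ePerm x i) := rfl

lemma antitone_descSort {k : ℕ} (x : Fin k → ℝ) : Antitone (descSort x) := by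
  intro i j hij
  exact Tuple.monotone_sort x (show j.rev ≤ i.rev from Fin.rev_le_rev.mpr hij)

noncomputable def front (k m : ℕ) : Finset (Fin k) :=
  Finset.univ.filter (fun i => (i : ℕ) < m)

lemma sum_descSort_eq_image {k : ℕ} (x : Fin k → ℝ) (B : Finset (Fin k)) :
    ∑ i ∈ B, descSort x i = ∑ a ∈ B.image (ePerm x), x a := by
  rw [Finset.sum_image (fun a _ b _ h => (ePerm x).injective h)]
  rfl

lemma le_apply_of_strictMono {m k : ℕ} {f : Fin m → Fin k} (hf : StrictMono f) :
    ∀ j : Fin m, (j : ℕ) ≤ (f j : ℕ) := by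
  intro j
  induction' h : (j : ℕ) with n ih generalizing j
  · simp
  · have hn : n < m := by omega
    have hlt : (⟨n, hn⟩ : Fin m) < j := by rw [Fin.lt_def]; simp; omega
    have h2 := hf hlt
    have h1 := ih ⟨n, hn⟩ rfl
    rw [Fin.lt_def] at h2; omega

lemma sum_le_front_of_antitone {k : ℕ} {f : Fin k → ℝ} (hf : Antitone f)
    (A : Finset (Fin k)) :
    ∑ a ∈ A, f a ≤ ∑ i ∈ front k A.card, f i := by
  have hmk : A.card ≤ k := by
    simpa using Finset.card_le_univ A
  set m := A.card with hm
  -- enumerate A increasingly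
  have e := A.orderIsoOfFin hm.symm
  have hstrict : StrictMono (fun j : Fin m => ((A.orderIsoOfFin hm.symm j : Fin k))) := by
    intro a b hab
    exact (A.orderIsoOfFin hm.symm).strictMono hab
  have h1 : ∑ a ∈ A, f a = ∑ j : Fin m, f (A.orderIsoOfFin hm.symm j) := by
    rw [← Finset.sum_attach A f]
    exact (Equiv.sum_comp (A.orderIsoOfFin hm.symm).toEquiv (fun a => f a)).symm
  have hfront : front k m = Finset.univ.image (Fin.castLE hmk) := by
    ext i
    simp only [front, Finset.mem_filter, Finset.mem_univ, true_and, Finset.mem_image]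
    constructor
    · intro hi
      exact ⟨⟨(i : ℕ), hi⟩, by simp [Fin.ext_iff]⟩
    · rintro ⟨j, rfl⟩
      simpa using j.isLt
  have h2 : ∑ i ∈ front k m, f i = ∑ j : Fin m, f (Fin.castLE hmk j) := by
    rw [hfront, Finset.sum_image (fun a _ b _ h => Fin.castLE_injective hmk h)]
  rw [h1, h2]
  apply Finset.sum_le_sum
  intro j _
  apply hf
  rw [Fin.le_def]
  exact le_apply_of_strictMono hstrict j

lemma front_min (k m : ℕ) : front k m = front k (min m k) := by
  ext i
  simp only [front, Finset.mem_filter, Finset.mem_univ, true_and]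
  have := i.isLt
  omega

lemma front_card (k m : ℕ) : (front k m).card = min m k := by
  rw [front_min]
  have hmk : min m k ≤ k := min_le_right m k
  have hfront : front k (min m k) = Finset.univ.image (Fin.castLE hmk) := by
    ext i
    simp only [front, Finset.mem_filter, Finset.mem_univ, true_and, Finset.mem_image]
    constructor
    · intro hi
      exact ⟨⟨(i : ℕ), hi⟩, by simp [Fin.ext_iff]⟩
    · rintro ⟨j, rfl⟩
      simpa using j.isLt
  rw [hfront, Finset.card_image_of_injective _ (Fin.castLE_injective hmk), Finset.card_univ,
    Fintype.card_fin]

lemma front_card_self (k m : ℕ) : front k ((front k m).card) = front k m := by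
  rw [front_card, ← front_min]

lemma partSum_eq {k : ℕ} (x : Fin k → ℝ) (m : ℕ) :
    partSum x m = ∑ i ∈ front k m, descSort x i := by
  rw [partSum, front, Finset.sum_filter]

lemma sum_le_partSum {k : ℕ} (x : Fin k → ℝ) (A : Finset (Fin k)) {m : ℕ}
    (hA : A.card = (front k m).card) : ∑ a ∈ A, x a ≤ partSum x m := by
  have h1 : ∑ a ∈ A, x a = ∑ b ∈ A.image (ePerm x).symm, descSort x b := by
    rw [Finset.sum_image (fun a _ b _ h => (ePerm x).symm.injective h)]
    apply Finset.sum_congr rfl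
    intro a _
    rw [descSort_eq, Equiv.apply_symm_apply]
  rw [h1, partSum_eq, ← front_card_self k m]
  have hc : (A.image (ePerm x).symm).card = (front k m).card := by
    rw [Finset.card_image_of_injective _ (ePerm x).symm.injective, hA]
  rw [← hc]
  exact sum_le_front_of_antitone (antitone_descSort x) _

lemma partSum_eq_image {k : ℕ} (x : Fin k → ℝ) (m : ℕ) :
    partSum x m = ∑ a ∈ (front k m).image (ePerm x), x a := by
  rw [partSum_eq, sum_descSort_eq_image]

lemma partSum_of_antitone {k : ℕ} {y : Fin k → ℝ} (hy : Antitone y) (m : ℕ) :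
    partSum y m = ∑ i ∈ front k m, y i := by
  apply le_antisymm
  · rw [partSum_eq_image]
    have hc : ((front k m).image (ePerm y)).card = (front k m).card :=
      Finset.card_image_of_injective _ (ePerm y).injective
    calc ∑ a ∈ (front k m).image (ePerm y), y a
        ≤ ∑ i ∈ front k ((front k m).image (ePerm y)).card, y i :=
          sum_le_front_of_antitone hy _
      _ = ∑ i ∈ front k m, y i := by rw [hc, front_card_self]
  · exact sum_le_partSum y (front k m) rfl

lemma sum_descSort {k : ℕ} (x : Fin k → ℝ) : ∑ i, descSort x i = ∑ i, x i := by
  rw [sum_descSort_eq_image]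
  congr 1
  exact Finset.image_univ_of_surjective (ePerm x).surjective


end Helpers

open MeasureTheory intervalIntegral

set_option maxHeartbeats 1000000 in

/-- Integrating a pointwise majorization relation: if `μ(t) ≺ λ(t)` for all
`t ∈ [0,T]`, then `∫₀ᵀ μ ≺ ∫₀ᵀ λ↓` (entrywise integration, `λ↓` the
pointwise decreasing rearrangement). -/
theorem integral_majorized {k : ℕ} (T : ℝ) (hT : 0 ≤ T)
    (μ l : ℝ → Fin k → ℝ)
    (hμ : ∀ i, IntervalIntegrable (fun t => μ t i) volume 0 T)
    (hl : ∀ i, IntervalIntegrable (fun t => l t i) volume 0 T)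
    (hld : ∀ i, IntervalIntegrable (fun t => descSort (l t) i) volume 0 T)
    (hmaj : ∀ t ∈ Set.Icc (0 : ℝ) T, Majorized (μ t) (l t)) :
    Majorized (fun i => ∫ t in (0 : ℝ)..T, μ t i)
              (fun i => ∫ t in (0 : ℝ)..T, descSort (l t) i) := by
  set X : Fin k → ℝ := fun i => ∫ t in (0 : ℝ)..T, μ t i with hX
  set Y : Fin k → ℝ := fun i => ∫ t in (0 : ℝ)..T, descSort (l t) i with hY
  have hIcc : Set.uIcc (0 : ℝ) T = Set.Icc 0 T := Set.uIcc_of_le hT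
  have hYanti : Antitone Y := by
    intro i j hij
    exact integral_mono_on hT (hld j) (hld i)
      (fun t _ => antitone_descSort (l t) hij)
  constructor
  · intro m hm
    set S := (front k m).image (ePerm X) with hS
    clear_value S
    have hSc : S.card = (front k m).card := by
      rw [hS]; exact Finset.card_image_of_injective _ (ePerm X).injective
    have h1 : partSum X m = ∑ a ∈ S, X a := by
      rw [hS]; exact partSum_eq_image X m
    have h2 : ∑ a ∈ S, X a = ∫ t in (0:ℝ)..T, ∑ a ∈ S, μ t a := by
      rw [integral_finset_sum (fun a _ => hμ a)]
    have h3 : (∫ t in (0:ℝ)..T, ∑ a ∈ S, μ t a)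
        ≤ ∫ t in (0:ℝ)..T, ∑ i ∈ front k m, descSort (l t) i := by
      apply integral_mono_on hT
      · have h := IntervalIntegrable.sum S (fun a _ => hμ a)
        rwa [show (∑ i ∈ S, fun t => μ t i) = fun t => ∑ a ∈ S, μ t a from
          by ext t; simp] at h
      · have h := IntervalIntegrable.sum (front k m) (fun i _ => hld i)
        rwa [show (∑ i ∈ front k m, fun t => descSort (l t) i)
            = fun t => ∑ i ∈ front k m, descSort (l t) i from by ext t; simp] at h
      · intro t ht
        calc ∑ a ∈ S, μ t a ≤ partSum (μ t) m := sum_le_partSum _ S hSc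
          _ ≤ partSum (l t) m := (hmaj t ht).1 m hm
          _ = ∑ i ∈ front k m, descSort (l t) i := partSum_eq _ m
    have h4 : (∫ t in (0:ℝ)..T, ∑ i ∈ front k m, descSort (l t) i)
        = ∑ i ∈ front k m, Y i := by
      rw [integral_finset_sum (fun i _ => hld i)]
    rw [h1, h2, partSum_of_antitone hYanti m, ← h4]
    exact h3
  · have h1 : ∑ i, X i = ∫ t in (0:ℝ)..T, ∑ i, μ t i := by
      rw [integral_finset_sum (fun i _ => hμ i)]
    have h2 : ∑ i, Y i = ∫ t in (0:ℝ)..T, ∑ i, descSort (l t) i := by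
      rw [integral_finset_sum (fun i _ => hld i)]
    rw [h1, h2]
    apply integral_congr
    intro t ht
    rw [hIcc] at ht
    exact (hmaj t ht).2.trans (sum_descSort (l t)).symm
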